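/- Let F be a countable field, let W be a finite-dimensional vector space over F, let T be an action of the additive group of W on a probability space (X,ℬ,μ) by invertible measure-preserving transformations, and let f ∈ L²(X,ℬ,μ) be such that the orbit {f ∘ T^w : w ∈ W} is precompact in the L² norm topology. Then for any polynomial mapping φ : F^n → W and any ε > 0, there exists r ∈ ℕ such that the set {u ∈ F^n : ‖f ∘ T^{φ(u)} − f‖_{L²} < ε} is IP*_r in the additive group F^n. -/

import Mathlib

open MeasureTheory Filter Set

/-- Finite sums set `FS(x₁,…,x_r)`. -/
def FSfin {G : Type*} [AddCommMonoid G] {r : ℕ} (x : Fin r → G) : Set G :=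
  {g | ∃ α : Finset (Fin r), α.Nonempty ∧ ∑ i ∈ α, x i = g}

/-- `A` is an IP_r set: it contains `FS(x₁,…,x_r)` for some `x₁,…,x_r`. -/
def IsIPr {G : Type*} [AddCommMonoid G] (r : ℕ) (A : Set G) : Prop :=
  ∃ x : Fin r → G, FSfin x ⊆ A

/-- `A` is an IP*_r set: it meets every IP_r set. -/
def IsIPrStar {G : Type*} [AddCommMonoid G] (r : ℕ) (A : Set G) : Prop :=
  ∀ B : Set G, IsIPr r B → (A ∩ B).Nonempty

/-- A monomial mapping `R^n → R`: `u ↦ a · u₁^{d₁} ⋯ u_n^{d_n}` with the `dᵢ` not all zero. -/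
def IsMonomialMap {R : Type*} [CommRing R] {n : ℕ} (ψ : (Fin n → R) → R) : Prop :=
  ∃ (a : R) (d : Fin n → ℕ), (∃ i, d i ≠ 0) ∧ ∀ u, ψ u = a * ∏ i, (u i) ^ (d i)

/-- A polynomial mapping `F^n → W`: a finite sum `u ↦ ∑ ψᵢ(u) • wᵢ` with `ψᵢ` monomial mappings. -/
def IsPolynomialMap {F : Type*} [Field F] {W : Type*} [AddCommGroup W] [Module F W]
    {n : ℕ} (φ : (Fin n → F) → W) : Prop :=
  ∃ (k : ℕ) (ψ : Fin k → ((Fin n → F) → F)) (w : Fin k → W),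
    (∀ i, IsMonomialMap (ψ i)) ∧ ∀ u, φ u = ∑ i, ψ i u • w i

/-!
Cover the orbit of `f` by finitely many cells of small `L²`-diameter and colour a finite set `s`
of indices by the cell of `f ∘ T^{φ(x_s)}`, where `x_s = ∑_{i ∈ s} x_i`. Folkman's theorem gives
disjoint blocks `B_1, …, B_N` all of whose nonempty unions get the same colour. Once `N` exceeds
the degree of `φ`, the alternating sum `∑_{J ⊆ [N]} (-1)^{|J|} φ(x_{B_J})` over the cube vanishes,
and since `φ 0 = 0` it expresses `φ(x_{B_{[N]}})` as a signed sum of the `2^N` small differences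
`φ(x_{B_J}) - φ(x_{B_{[N]}})`, measured in the seminorm `w ↦ ‖f ∘ T^w - f‖₂` on `W`.
-/

open Finset Hindman Function
open scoped ENNReal

section FiniteUnions

lemma tail_singletons (k : ℕ) :
    Stream'.tail (fun i => {i + k} : Stream' (Multiset ℕ)) = fun i => {i + (k + 1)} := by
  funext i
  simp only [Stream'.tail, Stream'.get, add_right_comm i 1 k, add_assoc]

lemma ne_zero_nodup_of_mem_FS_singletons {m : Multiset ℕ} (k : ℕ)
    (h : m ∈ FS (fun i => {i + k} : Stream' (Multiset ℕ))) :
    m ≠ 0 ∧ m.Nodup ∧ ∀ x ∈ m, k ≤ x := by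
  generalize ha : (fun i => {i + k} : Stream' (Multiset ℕ)) = a at h
  induction h generalizing k with
  | head' a => subst ha; simp [Stream'.head, Stream'.get]
  | tail' a m _ ih =>
    obtain ⟨hm0, hnd, hk⟩ := ih (k + 1) (ha ▸ (tail_singletons k).symm)
    exact ⟨hm0, hnd, fun x hx => (hk x hx).trans' k.le_succ⟩
  | cons' a m _ ih =>
    obtain ⟨-, hnd, hk⟩ := ih (k + 1) (ha ▸ (tail_singletons k).symm)
    subst ha
    simp only [Stream'.head, Stream'.get, zero_add, Multiset.singleton_add]
    refine ⟨Multiset.cons_ne_zero, Multiset.nodup_cons.2 ⟨fun hkm => ?_, hnd⟩, ?_⟩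
    · exact (hk k hkm).not_gt k.lt_succ_self
    · simp only [Multiset.mem_cons, forall_eq_or_imp, le_refl, true_and]
      exact fun x hx => (hk x hx).trans' k.le_succ

lemma Multiset.toFinset_sum {α ι : Type*} [DecidableEq α] (I : Finset ι) (f : ι → Multiset α) :
    (∑ t ∈ I, f t).toFinset = I.biUnion fun t => (f t).toFinset := by
  classical
  induction I using Finset.induction_on with
  | empty => simp
  | insert t I ht ih => rw [sum_insert ht, Multiset.toFinset_add, ih, Finset.biUnion_insert]

def IsMonochromaticUnions {α ι κ : Type*} [DecidableEq α] (c : Finset α → κ) (B : ι → Finset α) :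
    Prop :=
  (∀ t, (B t).Nonempty) ∧ Pairwise (Disjoint on B) ∧
    ∃ k, ∀ I : Finset ι, I.Nonempty → c (I.biUnion B) = k

/-- This is Hindman's theorem in the monoid of multisets: a finite sum of distinct singletons
has no repeated element, so its summands have disjoint supports. -/
theorem exists_isMonochromaticUnions {κ : Type*} [Finite κ] (c : Finset ℕ → κ) (N : ℕ) :
    ∃ B : Fin N → Finset ℕ, IsMonochromaticUnions c B := by
  classical
  obtain ⟨_, ⟨k, rfl⟩, b, hb⟩ := FS_partition_regular (fun i => {i} : Stream' (Multiset ℕ))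
    (Set.range fun k => {m | m ∈ FS _ ∧ c m.toFinset = k}) (Set.finite_range _)
    fun m hm => Set.mem_sUnion.2 ⟨_, ⟨c m.toFinset, rfl⟩, hm, rfl⟩
  have hsum : ∀ I : Finset (Fin N), I.Nonempty →
      c (∑ t ∈ I, b.get t).toFinset = k ∧ (∑ t ∈ I, b.get t) ≠ 0 ∧ (∑ t ∈ I, b.get t).Nodup := by
    intro I hI
    have hmem := FS.finsetSum b (I.map Fin.valEmbedding) hI.map
    rw [sum_map] at hmem
    obtain ⟨hFS, hc⟩ := hb hmem
    obtain ⟨hne, hnd, -⟩ := ne_zero_nodup_of_mem_FS_singletons 0 hFS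
    exact ⟨hc, hne, hnd⟩
  refine ⟨fun t => (b.get t).toFinset, fun t => ?_, fun t t' htt' => ?_, k, fun I hI => ?_⟩
  · simpa using (hsum {t} (singleton_nonempty t)).2.1
  · have hnd := (hsum {t, t'} (insert_nonempty _ _)).2.2
    rw [sum_pair htt', Multiset.nodup_add] at hnd
    exact Multiset.disjoint_toFinset.2 hnd.2.2
  · rw [← Multiset.toFinset_sum]
    exact (hsum I hI).1

/-- Folkman's finite unions theorem. -/
theorem exists_isMonochromaticUnions_subset_range (κ : Type*) [Finite κ] (N : ℕ) :
    ∃ r, ∀ c : Finset ℕ → κ, ∃ B : Fin N → Finset ℕ,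
      (∀ t, B t ⊆ Finset.range r) ∧ IsMonochromaticUnions c B := by
  classical
  by_contra! h
  choose C hC using h
  obtain ⟨χ, hχ⟩ := rado_selection fun S : Finset (Finset ℕ) => C ((S.biUnion id).sup id + 1)
  obtain ⟨B, hBne, hBdisj, k, hk⟩ := exists_isMonochromaticUnions χ N
  obtain ⟨S, hS, hχS⟩ := hχ (univ.image fun I : Finset (Fin N) => I.biUnion B)
  have hmem : ∀ I : Finset (Fin N), I.biUnion B ∈ S := fun I => hS (mem_image_of_mem _ (mem_univ I))
  refine hC ((S.biUnion id).sup id + 1) B (fun t => ?_) ⟨hBne, hBdisj, k, fun I hI => ?_⟩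
  · simpa using (subset_biUnion_of_mem id (hmem {t})).trans (subset_range_sup_succ _)
  · rw [← hχS _ (mem_image_of_mem _ (mem_univ I)), hk I hI]

end FiniteUnions

section CubeSums

lemma Finset.sum_Icc_neg_one_pow_card {α R : Type*} [DecidableEq α] [Ring R] {T s : Finset α}
    (h : T ⊂ s) : ∑ J ∈ Icc T s, (-1 : R) ^ #J = 0 := by
  have hdisj : ∀ K ∈ (s \ T).powerset, Disjoint T K := fun K hK =>
    disjoint_sdiff.mono_right (mem_powerset.1 hK)
  have hinj : Set.InjOn (T ∪ ·) (s \ T).powerset := fun K hK L hL hKL => calc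
    K = (T ∪ K) \ T := (union_sdiff_cancel_left (hdisj K hK)).symm
    _ = (T ∪ L) \ T := congrArg (· \ T) hKL
    _ = L := union_sdiff_cancel_left (hdisj L hL)
  have hsum : ∑ K ∈ (s \ T).powerset, (-1 : R) ^ #K = 0 := by
    simpa using congrArg (Int.cast : ℤ → R)
      (sum_powerset_neg_one_pow_card_of_nonempty (sdiff_nonempty.2 h.not_subset))
  rw [Icc_eq_image_powerset h.subset, sum_image hinj, ← mul_zero ((-1 : R) ^ #T), ← hsum, mul_sum]
  exact sum_congr rfl fun K hK => by rw [card_union_of_disjoint (hdisj K hK), pow_add]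

variable {R σ : Type*} [CommRing R] [Fintype σ]

/-- Expanding the product, each term involves fewer than `N` of the indices `t`, and the
alternating sum over the sets `J` containing them vanishes. -/
theorem sum_neg_one_pow_card_mul_prod_sum_eq_zero {N : ℕ} (hσ : Fintype.card σ < N)
    (z : σ → Fin N → R) : ∑ J : Finset (Fin N), (-1 : R) ^ #J * ∏ p, ∑ t ∈ J, z p t = 0 := by
  classical
  calc ∑ J : Finset (Fin N), (-1 : R) ^ #J * ∏ p, ∑ t ∈ J, z p t
      = ∑ J : Finset (Fin N), ∑ g : σ → Fin N,
          if Finset.univ.image g ⊆ J then (-1 : R) ^ #J * ∏ p, z p (g p) else 0 := by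
        refine sum_congr rfl fun J _ => ?_
        rw [prod_univ_sum, mul_sum, ← sum_filter]
        exact sum_congr (by ext g; simp [Fintype.mem_piFinset, Finset.image_subset_iff])
          fun _ _ => rfl
    _ = ∑ g : σ → Fin N, (∑ J ∈ Icc (Finset.univ.image g) univ, (-1 : R) ^ #J) *
          ∏ p, z p (g p) := by
        rw [sum_comm]
        refine sum_congr rfl fun g _ => ?_
        rw [sum_mul, ← sum_filter]
        exact sum_congr (by ext J; simp) fun _ _ => rfl
    _ = 0 := sum_eq_zero fun g _ => by
        rw [sum_Icc_neg_one_pow_card, zero_mul]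
        refine (Finset.subset_univ _).ssubset_of_ne fun h => ?_
        have hcard := card_image_le (s := univ) (f := g)
        rw [h, card_univ, card_univ, Fintype.card_fin] at hcard
        omega

theorem sum_neg_one_pow_card_mul_prod_pow_eq_zero {N : ℕ} (d : σ → ℕ) (hd : ∑ j, d j < N)
    (y : Fin N → σ → R) :
    ∑ J : Finset (Fin N), (-1 : R) ^ #J * ∏ j, (∑ t ∈ J, y t j) ^ d j = 0 := by
  have h := sum_neg_one_pow_card_mul_prod_sum_eq_zero (σ := Σ j, Fin (d j))
    (by simpa using hd) fun p t => y t p.1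
  simpa [← Finset.univ_sigma_univ, Finset.prod_sigma] using h

variable {G W : Type*} [AddCommMonoid G] [AddCommGroup W] {N : ℕ}

/-- Up to the sign `(-1)^N`, this is the iterated difference `Δ_{y 0} ⋯ Δ_{y (N-1)} φ` at `0`. -/
def cubeAlternatingSum (φ : G → W) (y : Fin N → G) : W :=
  ∑ J : Finset (Fin N), (-1 : ℤ) ^ #J • φ (∑ t ∈ J, y t)

lemma cubeAlternatingSum_sum {ι : Type*} (s : Finset ι) (φ : ι → G → W) (y : Fin N → G) :
    cubeAlternatingSum (fun u => ∑ i ∈ s, φ i u) y = ∑ i ∈ s, cubeAlternatingSum (φ i) y := by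
  simp only [cubeAlternatingSum, smul_sum]
  exact sum_comm

lemma cubeAlternatingSum_smul_const {S : Type*} [Ring S] [Module S W] (ψ : G → S) (w : W)
    (y : Fin N → G) : cubeAlternatingSum (fun u => ψ u • w) y = cubeAlternatingSum ψ y • w := by
  simp only [cubeAlternatingSum, sum_smul, smul_assoc]

lemma cubeAlternatingSum_monomial (a : R) (d : σ → ℕ) (hd : ∑ j, d j < N) (y : Fin N → σ → R) :
    cubeAlternatingSum (fun u => a * ∏ j, u j ^ d j) y = 0 := by
  simp only [cubeAlternatingSum, zsmul_eq_mul, Int.cast_pow, Int.cast_neg, Int.cast_one,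
    mul_left_comm _ a, ← mul_sum, Finset.sum_apply]
  rw [sum_neg_one_pow_card_mul_prod_pow_eq_zero d hd y, mul_zero]

end CubeSums

section PolynomialMaps

lemma IsMonomialMap.map_zero {R : Type*} [CommRing R] {n : ℕ} {ψ : (Fin n → R) → R}
    (hψ : IsMonomialMap ψ) : ψ 0 = 0 := by
  obtain ⟨a, d, ⟨j, hj⟩, hψ⟩ := hψ
  rw [hψ, prod_eq_zero (mem_univ j) (by simp [zero_pow hj]), mul_zero]

variable {F W : Type*} [Field F] [AddCommGroup W] [Module F W] {n : ℕ} {φ : (Fin n → F) → W}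

lemma IsPolynomialMap.map_zero (hφ : IsPolynomialMap φ) : φ 0 = 0 := by
  obtain ⟨k, ψ, w, hψ, hφ⟩ := hφ
  simp [hφ, fun i => (hψ i).map_zero]

lemma IsPolynomialMap.exists_cubeAlternatingSum_eq_zero (hφ : IsPolynomialMap φ) :
    ∃ N, 0 < N ∧ ∀ y : Fin N → Fin n → F, cubeAlternatingSum φ y = 0 := by
  obtain ⟨k, ψ, w, hψ, hφ⟩ := hφ
  choose a d _ hψ using hψ
  refine ⟨(Finset.univ.sup fun i => ∑ j, d i j) + 1, Nat.succ_pos _, fun y => ?_⟩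
  have hφ' : φ = fun u => ∑ i, (a i * ∏ j, u j ^ d i j) • w i := funext fun u => by simp [hφ, hψ]
  rw [hφ', cubeAlternatingSum_sum]
  refine sum_eq_zero fun i _ => ?_
  rw [cubeAlternatingSum_smul_const, cubeAlternatingSum_monomial, zero_smul]
  exact Nat.lt_succ_of_le (le_sup (f := fun i => ∑ j, d i j) (mem_univ i))

end PolynomialMaps

namespace AddGroupSeminorm

variable {W : Type*} [AddCommGroup W] (p : AddGroupSeminorm W)

lemma apply_neg_one_pow_zsmul (k : ℕ) (v : W) : p ((-1 : ℤ) ^ k • v) = p v := by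
  rcases neg_one_pow_eq_or ℤ k with h | h <;> simp [h]

lemma exists_fin_coloring_apply_sub_lt
    (hp : ∀ δ : ℝ, 0 < δ → ∃ (m : ℕ) (w : Fin m → W), ∀ v, ∃ i, p (v - w i) < δ)
    {η : ℝ} (hη : 0 < η) : ∃ (m : ℕ) (c : W → Fin m), ∀ v v', c v = c v' → p (v - v') < η := by
  obtain ⟨m, w, hw⟩ := hp (η / 2) (half_pos hη)
  choose c hc using hw
  refine ⟨m, c, fun v v' h => ?_⟩
  calc p (v - v') ≤ p (v - w (c v)) + p (v' - w (c v)) := by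
        simpa using map_sub_le_add p (v - w (c v)) (v' - w (c v))
    _ < η / 2 + η / 2 := add_lt_add (hc v) (h ▸ hc v')
    _ = η := add_halves η

lemma apply_univ_le_of_sum_eq_zero {N : ℕ} (hN : 0 < N) (v : Finset (Fin N) → W)
    (hv0 : v ∅ = 0) (hv : ∑ J, (-1 : ℤ) ^ #J • v J = 0) {η : ℝ}
    (hη : ∀ J, J.Nonempty → p (v J - v univ) ≤ η) :
    p (v univ) ≤ 2 ^ N * η := by
  have huniv : (univ : Finset (Fin N)).Nonempty := univ_nonempty_iff.2 ⟨⟨0, hN⟩⟩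
  have hsign : ∑ J : Finset (Fin N), (-1 : ℤ) ^ #J = 0 := by
    simpa using sum_powerset_neg_one_pow_card_of_nonempty huniv
  have hrepr : v univ = ∑ J ∈ Finset.univ.erase ∅, (-1 : ℤ) ^ #J • (v J - v univ) := by
    have h : ∑ J : Finset (Fin N), (-1 : ℤ) ^ #J • (v J - v univ) = 0 := by
      simp only [smul_sub, sum_sub_distrib, ← sum_smul, hv, hsign, zero_smul, sub_zero]
    rw [← add_sum_erase _ _ (mem_univ ∅), hv0] at h
    simpa [neg_add_eq_zero] using h
  have hη0 : 0 ≤ η := (apply_nonneg p _).trans (hη univ huniv)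
  calc p (v univ) = p (∑ J ∈ Finset.univ.erase ∅, (-1 : ℤ) ^ #J • (v J - v univ)) :=
        congrArg p hrepr
    _ ≤ ∑ J ∈ Finset.univ.erase ∅, p (v J - v univ) := by
        refine (le_sum_of_subadditive p (map_zero p).le (map_add_le_add p) _ _).trans_eq ?_
        simp only [apply_neg_one_pow_zsmul]
    _ ≤ #(Finset.univ.erase (∅ : Finset (Fin N))) * η := by
        rw [← nsmul_eq_mul]
        exact sum_le_card_nsmul _ _ η fun J hJ => hη J (nonempty_of_ne_empty (ne_of_mem_erase hJ))
    _ ≤ 2 ^ N * η := by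
        gcongr
        exact_mod_cast card_erase_le.trans (by simp)

end AddGroupSeminorm

lemma sum_extend_mem_FSfin {G : Type*} [AddCommMonoid G] {r : ℕ} (x : Fin r → G) {U : Finset ℕ}
    (hU : U.Nonempty) (hUr : U ⊆ Finset.range r) : ∑ i ∈ U, extend Fin.val x 0 i ∈ FSfin x := by
  have hlt : ∀ i ∈ U, i < r := fun i hi => Finset.mem_range.1 (hUr hi)
  refine ⟨U.attachFin hlt, ?_, ?_⟩
  · rwa [← Finset.card_pos, card_attachFin, Finset.card_pos]
  · have h := sum_image (f := extend Fin.val x 0) (s := U.attachFin hlt) Fin.val_injective.injOn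
    rw [image_val_attachFin] at h
    simpa [Fin.val_injective.extend_apply] using h.symm

theorem exists_isIPrStar_seminorm_lt {G W : Type*} [AddCommMonoid G] [AddCommGroup W]
    (p : AddGroupSeminorm W)
    (hp : ∀ δ : ℝ, 0 < δ → ∃ (m : ℕ) (w : Fin m → W), ∀ v, ∃ i, p (v - w i) < δ)
    {φ : G → W} (hφ0 : φ 0 = 0) {N : ℕ} (hN : 0 < N)
    (hφ : ∀ y : Fin N → G, cubeAlternatingSum φ y = 0) {ε : ℝ} (hε : 0 < ε) :
    ∃ r, IsIPrStar r {u | p (φ u) < ε} := by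
  classical
  set η := ε / 2 ^ (N + 1)
  obtain ⟨m, c, hc⟩ := p.exists_fin_coloring_apply_sub_lt hp (η := η) (by positivity)
  obtain ⟨r, hr⟩ := exists_isMonochromaticUnions_subset_range (Fin m) N
  refine ⟨r, fun A ⟨x, hx⟩ => ?_⟩
  set x' : ℕ → G := extend Fin.val x 0
  obtain ⟨B, hBr, hBne, hBdisj, k, hk⟩ := hr fun s => c (φ (∑ i ∈ s, x' i))
  set v : Finset (Fin N) → W := fun J => φ (∑ i ∈ J.biUnion B, x' i)
  have huniv : (univ : Finset (Fin N)).Nonempty := univ_nonempty_iff.2 ⟨⟨0, hN⟩⟩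
  have hv : ∑ J, (-1 : ℤ) ^ #J • v J = 0 := by
    simpa [v, cubeAlternatingSum, sum_biUnion (hBdisj.set_pairwise _)] using
      hφ fun t => ∑ i ∈ B t, x' i
  have hbound := p.apply_univ_le_of_sum_eq_zero hN v (by simp [v, hφ0]) hv (η := η)
    fun J hJ => (hc _ _ ((hk J hJ).trans (hk _ huniv).symm)).le
  refine ⟨∑ i ∈ Finset.univ.biUnion B, x' i, ?_, hx (sum_extend_mem_FSfin x
    (huniv.biUnion fun t _ => hBne t) (biUnion_subset.2 fun t _ => hBr t))⟩
  calc p (v univ) ≤ 2 ^ N * η := hbound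
    _ = ε / 2 := by simp only [η]; field_simp; ring
    _ < ε := half_lt_self hε

section OrbitSeminorm

variable {W X : Type*} [AddCommGroup W] [MeasurableSpace X] {μ : Measure X} {T : W → X → X}
  {f : X → ℝ}

lemma eLpNorm_comp_sub_comp (hTadd : ∀ v w : W, T (v + w) = T v ∘ T w)
    (hTmp : ∀ w : W, MeasurePreserving (T w) μ μ) (hf : AEStronglyMeasurable f μ)
    (p : ℝ≥0∞) (v w : W) :
    eLpNorm (fun x => f (T v x) - f (T w x)) p μ =
      eLpNorm (fun x => f (T (v - w) x) - f x) p μ := by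
  have h : (fun x => f (T v x) - f (T w x)) = (fun x => f (T (v - w) x) - f x) ∘ T w := by
    funext x
    rw [Function.comp_apply, ← Function.comp_apply (f := T (v - w)), ← hTadd, sub_add_cancel]
  rw [h, eLpNorm_comp_measurePreserving _ (hTmp w)]
  exact (hf.comp_measurePreserving (hTmp _)).sub hf

noncomputable def orbitSeminorm (hT0 : T 0 = id) (hTadd : ∀ v w : W, T (v + w) = T v ∘ T w)
    (hTmp : ∀ w : W, MeasurePreserving (T w) μ μ) (hf : MemLp f 2 μ) : AddGroupSeminorm W where
  toFun v := (eLpNorm (fun x => f (T v x) - f x) 2 μ).toReal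
  map_zero' := by simp [hT0]
  add_le' v w := by
    have hmem : ∀ v : W, MemLp (fun x => f (T v x)) 2 μ := fun v =>
      hf.comp_measurePreserving (hTmp v)
    have hsplit := eLpNorm_add_le ((hmem (v + w)).sub (hmem w)).1 ((hmem w).sub hf).1 one_le_two
    rw [sub_add_sub_cancel] at hsplit
    calc (eLpNorm (fun x => f (T (v + w) x) - f x) 2 μ).toReal
        ≤ (eLpNorm (fun x => f (T (v + w) x) - f (T w x)) 2 μ).toReal +
          (eLpNorm (fun x => f (T w x) - f x) 2 μ).toReal :=
          ENNReal.toReal_le_add hsplit ((hmem _).sub (hmem _)).eLpNorm_ne_top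
            ((hmem w).sub hf).eLpNorm_ne_top
      _ = _ := by rw [eLpNorm_comp_sub_comp hTadd hTmp hf.1, add_sub_cancel_right]
  neg' v := by
    rw [← zero_sub, ← eLpNorm_comp_sub_comp hTadd hTmp hf.1, hT0]
    exact congrArg ENNReal.toReal (eLpNorm_sub_comm f (f ∘ T v) 2 μ)

lemma orbitSeminorm_sub (hT0 : T 0 = id) (hTadd : ∀ v w : W, T (v + w) = T v ∘ T w)
    (hTmp : ∀ w : W, MeasurePreserving (T w) μ μ) (hf : MemLp f 2 μ) (v w : W) :
    orbitSeminorm hT0 hTadd hTmp hf (v - w) =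
      (eLpNorm (fun x => f (T v x) - f (T w x)) 2 μ).toReal :=
  congrArg ENNReal.toReal (eLpNorm_comp_sub_comp hTadd hTmp hf.1 2 v w).symm

end OrbitSeminorm

theorem compact_function_polynomial_returns_iprstar_general
    {F : Type*} [Field F]
    {W : Type*} [AddCommGroup W] [Module F W]
    {X : Type*} [MeasurableSpace X] (μ : Measure X)
    (T : W → X → X) (hT0 : T 0 = id)
    (hTadd : ∀ v w : W, T (v + w) = T v ∘ T w)
    (hTmp : ∀ w : W, MeasurePreserving (T w) μ μ)
    (f : X → ℝ) (hf : MemLp f 2 μ)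
    (horbit : ∀ δ : ℝ, 0 < δ → ∃ (m : ℕ) (w : Fin m → W), ∀ v : W, ∃ i : Fin m,
      (eLpNorm (fun x => f (T v x) - f (T (w i) x)) 2 μ).toReal < δ)
    {n : ℕ} (φ : (Fin n → F) → W) (hφ : IsPolynomialMap φ)
    (ε : ℝ) (hε : 0 < ε) :
    ∃ r : ℕ, IsIPrStar r
      {u : Fin n → F | (eLpNorm (fun x => f (T (φ u) x) - f x) 2 μ).toReal < ε} := by
  obtain ⟨N, hN, hφN⟩ := hφ.exists_cubeAlternatingSum_eq_zero
  refine exists_isIPrStar_seminorm_lt (orbitSeminorm hT0 hTadd hTmp hf) (fun δ hδ => ?_)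
    hφ.map_zero hN hφN hε
  obtain ⟨m, w, hw⟩ := horbit δ hδ
  exact ⟨m, w, fun v => by simpa only [orbitSeminorm_sub] using hw v⟩

/-- If `f ∈ L²(X,ℬ,μ)` has norm-precompact orbit (equivalently, totally bounded orbit)
under an action `T` of the additive group of a finite-dimensional vector space `W` over a
countable field `F`, then for any polynomial mapping `φ : F^n → W` and any `ε > 0` the set
`{u : ‖f ∘ T^{φ(u)} − f‖_{L²} < ε}` is IP*_r for some `r`. -/
theorem compact_function_polynomial_returns_iprstar
    {F : Type*} [Field F] [Countable F]
    {W : Type*} [AddCommGroup W] [Module F W] [FiniteDimensional F W]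
    {X : Type*} [MeasurableSpace X] (μ : Measure X) [IsProbabilityMeasure μ]
    (T : W → X → X) (hT0 : T 0 = id)
    (hTadd : ∀ v w : W, T (v + w) = T v ∘ T w)
    (hTmp : ∀ w : W, MeasurePreserving (T w) μ μ)
    (f : X → ℝ) (hf : MemLp f 2 μ)
    (horbit : ∀ δ : ℝ, 0 < δ → ∃ (m : ℕ) (w : Fin m → W), ∀ v : W, ∃ i : Fin m,
      (eLpNorm (fun x => f (T v x) - f (T (w i) x)) 2 μ).toReal < δ)
    {n : ℕ} (φ : (Fin n → F) → W) (hφ : IsPolynomialMap φ)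
    (ε : ℝ) (hε : 0 < ε) :
    ∃ r : ℕ, IsIPrStar r
      {u : Fin n → F | (eLpNorm (fun x => f (T (φ u) x) - f x) 2 μ).toReal < ε} :=
  compact_function_polynomial_returns_iprstar_general μ T hT0 hTadd hTmp f hf horbit φ hφ ε hε
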